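/- Let Γ be a countable group and μ an irreducible probability measure on Γ with spectral radius ρ(μ). Then there exists a function h : Γ → (0, ∞) that is ρ(μ)-subharmonic for μ, i.e., ∑_{y ∈ Γ} μ(x^{-1}y) h(y) ≤ ρ(μ) · h(x) for every x ∈ Γ. -/

import Mathlib

open Filter Topology
open scoped Pointwise Classical

/-- The `n`-th convolution power of a (probability) function `μ` on a group. -/
noncomputable def convPow {G : Type*} [Group G] (μ : G → ℝ) : ℕ → G → ℝ
  | 0 => fun x => if x = 1 then 1 else 0
  | n + 1 => fun x => ∑' y : G, μ y * convPow μ n (y⁻¹ * x)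

/-- The support `S_μ = {x : μ(x) > 0}`. -/
def msupp {G : Type*} [Group G] (μ : G → ℝ) : Set G := {g : G | 0 < μ g}

/-- `Γ₀ = ⋃_{k ≥ 1} S_μ^{-k} S_μ^{k}`. -/
def Gamma0 {G : Type*} [Group G] (μ : G → ℝ) : Set G :=
  ⋃ k ≥ 1, (msupp μ ^ k)⁻¹ * msupp μ ^ k

/-- `μ` is a probability measure on the countable group `G`. -/
def IsProbMeas {G : Type*} [Group G] (μ : G → ℝ) : Prop :=
  (∀ x, 0 ≤ μ x) ∧ ∑' x : G, μ x = 1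

/-- Irreducibility: the semigroup generated by the support is the whole group,
`⋃_{n ≥ 1} S_μ^n = Γ`. -/
def IsIrreducibleMeas {G : Type*} [Group G] (μ : G → ℝ) : Prop :=
  ∀ x : G, ∃ n : ℕ, 0 < n ∧ x ∈ msupp μ ^ n

/-- `d` is the period of `μ`, i.e. `d = gcd {n ∈ ℕ : μ⁽ⁿ⁾(e) > 0}`, characterized by:
`d` divides every element of the set, and every common divisor of the set divides `d`. -/
def IsPeriodOf {G : Type*} [Group G] (μ : G → ℝ) (d : ℕ) : Prop :=
  (∀ n : ℕ, 0 < n → 0 < convPow μ n 1 → d ∣ n) ∧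
  (∀ c : ℕ, (∀ n : ℕ, 0 < n → 0 < convPow μ n 1 → c ∣ n) → c ∣ d)

/-!
Supermultiplicativity `μ⁽ⁿ⁾(a) μ⁽ᵐ⁾(b) ≤ μ⁽ⁿ⁺ᵐ⁾(ab)` gives `μ⁽ⁿ⁾(e) ≤ ρⁿ`, and with irreducibility
`μ⁽ⁿ⁾(x) ≤ C_x ρⁿ`, so for `0 ≤ r < ρ⁻¹` the Green function `G_r(x) = ∑ₙ μ⁽ⁿ⁾(x) rⁿ` converges.
Convolving with `μ` shifts this series by one step, so `x ↦ G_r(x⁻¹)` is `r⁻¹`-subharmonic.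
Irreducibility also gives the Harnack inequalities `μ⁽ᵐ⁾(z) rᵐ G_r(w) ≤ G_r(zw)`, which keep
the normalized kernels `G_r(x⁻¹) / G_r(e)` between positive bounds independent of `r`; a limit
point of these kernels as `r ↑ ρ⁻¹` is a positive `ρ`-subharmonic function.
-/

theorem exists_pos_tsum_mul_le_of_tendsto {ι α : Type*} {l : Filter ι} [l.NeBot]
    {p : α → α → ℝ} {u : ι → α → ℝ} {s : ι → ℝ} {ρ : ℝ} (hs : Tendsto s l (𝓝 ρ))
    {c C : α → ℝ} (hc : ∀ x, 0 < c x) (hu : ∀ᶠ i in l, ∀ x, u i x ∈ Set.Icc (c x) (C x))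
    (hsub : ∀ᶠ i in l, ∀ x (F : Finset α), ∑ y ∈ F, p x y * u i y ≤ s i * u i x) :
    ∃ h : α → ℝ, (∀ x, 0 < h x) ∧ ∀ x, ∑' y, p x y * h y ≤ ρ * h x := by
  have hU := Ultrafilter.of_le l
  -- Tychonoff: the `u i` lie in a compact product of intervals
  obtain ⟨h, hmem, hlim⟩ := (isCompact_univ_pi fun x => isCompact_Icc (a := c x) (b := C x))
    |>.ultrafilter_le_nhds (.map u (.of l))
      (le_principal_iff.2 (hU (hu.mono fun i hi x _ => hi x)))
  have hlim : Tendsto u (Ultrafilter.of l) (𝓝 h) := hlim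
  have hfin : ∀ x (F : Finset α), ∑ y ∈ F, p x y * h y ≤ ρ * h x := fun x F =>
    le_of_tendsto_of_tendsto
      (tendsto_finsetSum F fun y _ => (tendsto_pi_nhds.1 hlim y).const_mul _)
      ((hs.mono_left hU).mul (tendsto_pi_nhds.1 hlim x)) (hU (hsub.mono fun i hi => hi x F))
  refine ⟨h, fun x => (hc x).trans_le (hmem x trivial).1, fun x => ?_⟩
  exact tsum_le_of_sum_le' (by simpa using hfin x ∅) (hfin x)

section convPow

variable {G : Type*} [Group G] {μ : G → ℝ}

theorem IsProbMeas.summable (hμ : IsProbMeas μ) : Summable μ := by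
  by_contra hs
  simpa [tsum_eq_zero_of_not_summable hs] using hμ.2

theorem convPow_nonneg (hμ : ∀ x, 0 ≤ μ x) : ∀ (n : ℕ) (x : G), 0 ≤ convPow μ n x
  | 0, x => by simp only [convPow]; split <;> norm_num
  | n + 1, x => tsum_nonneg fun y => mul_nonneg (hμ y) (convPow_nonneg hμ n _)

theorem convPow_le_one (hμ : IsProbMeas μ) : ∀ (n : ℕ) (x : G), convPow μ n x ≤ 1
  | 0, x => by simp only [convPow]; split <;> norm_num
  | n + 1, x => by
    have hle : ∀ y, μ y * convPow μ n (y⁻¹ * x) ≤ μ y := fun y =>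
      mul_le_of_le_one_right (hμ.1 y) (convPow_le_one hμ n _)
    calc convPow μ (n + 1) x = ∑' y, μ y * convPow μ n (y⁻¹ * x) := rfl
      _ ≤ ∑' y, μ y := Summable.tsum_le_tsum hle
          (hμ.summable.of_nonneg_of_le (fun y => mul_nonneg (hμ.1 y) (convPow_nonneg hμ.1 n _))
            hle) hμ.summable
      _ = 1 := hμ.2

theorem summable_mul_convPow (hμ : IsProbMeas μ) (n : ℕ) (f : G → G) :
    Summable fun y => μ y * convPow μ n (f y) :=
  hμ.summable.of_nonneg_of_le (fun y => mul_nonneg (hμ.1 y) (convPow_nonneg hμ.1 n _))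
    fun y => mul_le_of_le_one_right (hμ.1 y) (convPow_le_one hμ n _)

theorem convPow_mul_le_convPow_add (hμ : IsProbMeas μ) :
    ∀ (n m : ℕ) (a b : G), convPow μ n a * convPow μ m b ≤ convPow μ (n + m) (a * b)
  | 0, m, a, b => by
    by_cases h : a = 1
    · simp [convPow, h]
    · simpa [convPow, h] using convPow_nonneg hμ.1 m (a * b)
  | n + 1, m, a, b => by
    have key : ∀ y, μ y * convPow μ n (y⁻¹ * a) * convPow μ m b
        ≤ μ y * convPow μ (n + m) (y⁻¹ * (a * b)) := fun y => by
      rw [mul_assoc, ← mul_assoc y⁻¹]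
      exact mul_le_mul_of_nonneg_left (convPow_mul_le_convPow_add hμ n m _ b) (hμ.1 y)
    calc convPow μ (n + 1) a * convPow μ m b
        = ∑' y, μ y * convPow μ n (y⁻¹ * a) * convPow μ m b := tsum_mul_right.symm
      _ ≤ ∑' y, μ y * convPow μ (n + m) (y⁻¹ * (a * b)) :=
          Summable.tsum_le_tsum key ((summable_mul_convPow hμ n _).mul_right _)
            (summable_mul_convPow hμ (n + m) _)
      _ = convPow μ (n + 1 + m) (a * b) := by rw [Nat.add_right_comm]; rfl

theorem convPow_pos_of_mem_pow (hμ : IsProbMeas μ) :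
    ∀ (n : ℕ) (x : G), x ∈ msupp μ ^ n → 0 < convPow μ n x
  | 0, x, hx => by simp_all [convPow]
  | n + 1, _, hx => by
    obtain ⟨v, hv, u, hu, rfl⟩ := Set.mem_mul.1 (pow_succ' (msupp μ) n ▸ hx)
    calc 0 < μ v * convPow μ n (v⁻¹ * (v * u)) := by
          rw [inv_mul_cancel_left]; exact mul_pos hv (convPow_pos_of_mem_pow hμ n u hu)
      _ ≤ convPow μ (n + 1) (v * u) :=
          (summable_mul_convPow hμ n (fun y => y⁻¹ * (v * u))).le_tsum v
            fun y _ => mul_nonneg (hμ.1 y) (convPow_nonneg hμ.1 n _)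

theorem tsum_mul_convPow_inv (n : ℕ) (x : G) :
    ∑' y, μ (x⁻¹ * y) * convPow μ n y⁻¹ = convPow μ (n + 1) x⁻¹ := by
  rw [← (Equiv.mulLeft x).tsum_eq]
  simp only [convPow, Equiv.coe_mulLeft, inv_mul_cancel_left, mul_inv_rev]

end convPow

section spectralRadius

variable {G : Type*} [Group G] {μ : G → ℝ}

noncomputable def convSpectralRadius (μ : G → ℝ) : ℝ :=
  limsup (fun n : ℕ => convPow μ n 1 ^ (n : ℝ)⁻¹) atTop

theorem isBoundedUnder_convPow_one_rpow (hμ : IsProbMeas μ) :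
    IsBoundedUnder (· ≤ ·) atTop fun n : ℕ => convPow μ n (1 : G) ^ (n : ℝ)⁻¹ :=
  isBoundedUnder_of ⟨1, fun n => Real.rpow_le_one (convPow_nonneg hμ.1 n 1)
    (convPow_le_one hμ n 1) (by positivity)⟩

theorem convPow_one_pow_le (hμ : IsProbMeas μ) (k : ℕ) :
    ∀ j : ℕ, convPow μ k (1 : G) ^ j ≤ convPow μ (j * k) 1
  | 0 => by simp [convPow]
  | j + 1 =>
    calc convPow μ k (1 : G) ^ (j + 1) = convPow μ k 1 ^ j * convPow μ k 1 := pow_succ _ _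
      _ ≤ convPow μ (j * k) 1 * convPow μ k 1 :=
          mul_le_mul_of_nonneg_right (convPow_one_pow_le hμ k j) (convPow_nonneg hμ.1 _ _)
      _ ≤ convPow μ (j * k + k) (1 * 1) := convPow_mul_le_convPow_add hμ _ _ _ _
      _ = convPow μ ((j + 1) * k) 1 := by rw [one_mul, Nat.succ_mul]

theorem convPow_one_rpow_inv_le_convSpectralRadius (hμ : IsProbMeas μ) {k : ℕ} (hk : 0 < k) :
    convPow μ k (1 : G) ^ (k : ℝ)⁻¹ ≤ convSpectralRadius μ := by
  have ha : 0 ≤ convPow μ k (1 : G) := convPow_nonneg hμ.1 _ _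
  refine le_limsup_of_frequently_le (frequently_atTop.2 fun N => ⟨(N + 1) * k, ?_, ?_⟩)
    (isBoundedUnder_convPow_one_rpow hμ)
  · nlinarith
  · calc convPow μ k (1 : G) ^ (k : ℝ)⁻¹
          = (convPow μ k 1 ^ (N + 1)) ^ (((N + 1) * k : ℕ) : ℝ)⁻¹ := by
            rw [← Real.rpow_natCast, ← Real.rpow_mul ha]
            congr 1
            push_cast
            field_simp
      _ ≤ convPow μ ((N + 1) * k) 1 ^ (((N + 1) * k : ℕ) : ℝ)⁻¹ :=
          Real.rpow_le_rpow (by positivity) (convPow_one_pow_le hμ k _) (by positivity)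

theorem convPow_one_le_pow (hμ : IsProbMeas μ) (k : ℕ) :
    convPow μ k (1 : G) ≤ convSpectralRadius μ ^ k := by
  rcases Nat.eq_zero_or_pos k with rfl | hk
  · simp [convPow]
  have ha : 0 ≤ convPow μ k (1 : G) := convPow_nonneg hμ.1 _ _
  calc convPow μ k (1 : G) = (convPow μ k 1 ^ (k : ℝ)⁻¹) ^ k := by
        rw [← Real.rpow_natCast, ← Real.rpow_mul ha, inv_mul_cancel₀ (by positivity),
          Real.rpow_one]
    _ ≤ convSpectralRadius μ ^ k := pow_le_pow_left₀ (by positivity)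
        (convPow_one_rpow_inv_le_convSpectralRadius hμ hk) k

theorem convSpectralRadius_pos (hμ : IsProbMeas μ) (hirr : IsIrreducibleMeas μ) :
    0 < convSpectralRadius μ := by
  obtain ⟨k, hk, hmem⟩ := hirr 1
  exact (Real.rpow_pos_of_pos (convPow_pos_of_mem_pow hμ k 1 hmem) _).trans_le
    (convPow_one_rpow_inv_le_convSpectralRadius hμ hk)

theorem convPow_mul_convPow_inv_le (hμ : IsProbMeas μ) (n m : ℕ) (x : G) :
    convPow μ n x * convPow μ m x⁻¹ ≤ convSpectralRadius μ ^ (n + m) := by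
  simpa using (convPow_mul_le_convPow_add hμ n m x x⁻¹).trans
    (mul_inv_cancel x ▸ convPow_one_le_pow hμ _)

end spectralRadius

section greenFun

variable {G : Type*} [Group G] {μ : G → ℝ} {r : ℝ}

noncomputable def greenFun (μ : G → ℝ) (r : ℝ) (x : G) : ℝ :=
  ∑' n : ℕ, convPow μ n x * r ^ n

theorem greenFun_nonneg (hμ : IsProbMeas μ) (hr : 0 ≤ r) (x : G) : 0 ≤ greenFun μ r x :=
  tsum_nonneg fun n => mul_nonneg (convPow_nonneg hμ.1 n x) (pow_nonneg hr n)

theorem summable_convPow_mul_pow (hμ : IsProbMeas μ) (hirr : IsIrreducibleMeas μ)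
    (hr : 0 ≤ r) (hrρ : r * convSpectralRadius μ < 1) (x : G) :
    Summable fun n : ℕ => convPow μ n x * r ^ n := by
  set ρ := convSpectralRadius μ
  have hρ : 0 ≤ ρ := (convSpectralRadius_pos hμ hirr).le
  obtain ⟨m, -, hm⟩ := hirr x⁻¹
  have ha : 0 < convPow μ m x⁻¹ := convPow_pos_of_mem_pow hμ m _ hm
  refine Summable.of_nonneg_of_le
    (fun n => mul_nonneg (convPow_nonneg hμ.1 n x) (pow_nonneg hr n)) (fun n => ?_)
    ((summable_geometric_of_lt_one (mul_nonneg hr hρ) hrρ).mul_left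
      (ρ ^ m / convPow μ m x⁻¹))
  have hn : convPow μ n x ≤ ρ ^ m / convPow μ m x⁻¹ * ρ ^ n := by
    rw [div_mul_eq_mul_div, le_div_iff₀ ha, ← pow_add, add_comm m]
    exact convPow_mul_convPow_inv_le hμ n m x
  calc convPow μ n x * r ^ n ≤ ρ ^ m / convPow μ m x⁻¹ * ρ ^ n * r ^ n :=
        mul_le_mul_of_nonneg_right hn (pow_nonneg hr n)
    _ = ρ ^ m / convPow μ m x⁻¹ * (r * ρ) ^ n := by ring

theorem one_le_greenFun_one (hμ : IsProbMeas μ) (hirr : IsIrreducibleMeas μ)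
    (hr : 0 ≤ r) (hrρ : r * convSpectralRadius μ < 1) : 1 ≤ greenFun μ r (1 : G) := by
  simpa [greenFun, convPow] using (summable_convPow_mul_pow hμ hirr hr hrρ 1).le_tsum 0
    fun n _ => mul_nonneg (convPow_nonneg hμ.1 n 1) (pow_nonneg hr n)

theorem convPow_mul_greenFun_le (hμ : IsProbMeas μ) (hirr : IsIrreducibleMeas μ)
    (hr : 0 ≤ r) (hrρ : r * convSpectralRadius μ < 1) (m : ℕ) (z w : G) :
    convPow μ m z * r ^ m * greenFun μ r w ≤ greenFun μ r (z * w) := by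
  have hs := summable_convPow_mul_pow hμ hirr hr hrρ (z * w)
  have hterm : ∀ n : ℕ, convPow μ m z * r ^ m * (convPow μ n w * r ^ n)
      ≤ convPow μ (n + m) (z * w) * r ^ (n + m) := fun n =>
    calc convPow μ m z * r ^ m * (convPow μ n w * r ^ n)
        = convPow μ m z * convPow μ n w * r ^ (m + n) := by ring
      _ ≤ convPow μ (n + m) (z * w) * r ^ (n + m) := by
        rw [add_comm n]
        exact mul_le_mul_of_nonneg_right (convPow_mul_le_convPow_add hμ m n z w)
          (pow_nonneg hr _)
  calc convPow μ m z * r ^ m * greenFun μ r w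
      = ∑' n : ℕ, convPow μ m z * r ^ m * (convPow μ n w * r ^ n) := tsum_mul_left.symm
    _ ≤ ∑' n : ℕ, convPow μ (n + m) (z * w) * r ^ (n + m) :=
        Summable.tsum_le_tsum hterm
          ((summable_convPow_mul_pow hμ hirr hr hrρ w).mul_left _)
          ((summable_nat_add_iff m).2 hs)
    _ ≤ greenFun μ r (z * w) :=
        Summable.tsum_le_tsum_of_inj (· + m) (add_left_injective m)
          (fun n _ => mul_nonneg (convPow_nonneg hμ.1 n _) (pow_nonneg hr n))
          (fun n => le_rfl) ((summable_nat_add_iff m).2 hs) hs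

theorem mul_sum_mul_greenFun_inv_le (hμ : IsProbMeas μ) (hirr : IsIrreducibleMeas μ)
    (hr : 0 ≤ r) (hrρ : r * convSpectralRadius μ < 1) (x : G) (F : Finset G) :
    r * ∑ y ∈ F, μ (x⁻¹ * y) * greenFun μ r y⁻¹ ≤ greenFun μ r x⁻¹ := by
  have hs := summable_convPow_mul_pow hμ hirr hr hrρ
  have hterm : ∀ n : ℕ, ∑ y ∈ F, μ (x⁻¹ * y) * (convPow μ n y⁻¹ * r ^ (n + 1))
      ≤ convPow μ (n + 1) x⁻¹ * r ^ (n + 1) := fun n => by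
    simp only [← mul_assoc, ← Finset.sum_mul]
    refine mul_le_mul_of_nonneg_right ?_ (pow_nonneg hr _)
    rw [← tsum_mul_convPow_inv]
    refine Summable.sum_le_tsum F
      (fun y _ => mul_nonneg (hμ.1 _) (convPow_nonneg hμ.1 n _)) ?_
    exact (summable_mul_convPow hμ n fun w => w⁻¹ * x⁻¹).comp_injective
      (mul_right_injective x⁻¹) |>.congr fun y => by simp
  calc r * ∑ y ∈ F, μ (x⁻¹ * y) * greenFun μ r y⁻¹
      = ∑' n : ℕ, ∑ y ∈ F, μ (x⁻¹ * y) * (convPow μ n y⁻¹ * r ^ (n + 1)) := by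
        have hs' : ∀ y : G, Summable fun n : ℕ => convPow μ n y * r ^ (n + 1) := fun y =>
          ((hs y).mul_right r).congr fun n => by ring
        rw [Summable.tsum_finsetSum fun y _ => (hs' y⁻¹).mul_left _, Finset.mul_sum]
        refine Finset.sum_congr rfl fun y _ => ?_
        rw [greenFun, ← tsum_mul_left, ← tsum_mul_left]
        exact tsum_congr fun n => by ring
    _ ≤ ∑' n : ℕ, convPow μ (n + 1) x⁻¹ * r ^ (n + 1) :=
        Summable.tsum_le_tsum hterm
          ((summable_nat_add_iff 1).2 (hs x⁻¹) |>.of_nonneg_of_le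
            (fun n => Finset.sum_nonneg fun y _ => mul_nonneg (hμ.1 _)
              (mul_nonneg (convPow_nonneg hμ.1 n _) (pow_nonneg hr _))) hterm)
          ((summable_nat_add_iff 1).2 (hs x⁻¹))
    _ ≤ greenFun μ r x⁻¹ := by
        rw [greenFun, (hs x⁻¹).tsum_eq_zero_add]
        exact le_add_of_nonneg_left (mul_nonneg (convPow_nonneg hμ.1 0 _) (pow_nonneg hr 0))

theorem exists_greenFun_inv_div_mem_Icc (hμ : IsProbMeas μ) (hirr : IsIrreducibleMeas μ)
    {r₀ : ℝ} (hr₀ : 0 < r₀) (x : G) :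
    ∃ c C : ℝ, 0 < c ∧ ∀ r, r₀ ≤ r → r * convSpectralRadius μ < 1 →
      greenFun μ r x⁻¹ / greenFun μ r 1 ∈ Set.Icc c C := by
  obtain ⟨m, -, hm⟩ := hirr x⁻¹
  obtain ⟨m', -, hm'⟩ := hirr x
  have ha := convPow_pos_of_mem_pow hμ m _ hm
  have hb := convPow_pos_of_mem_pow hμ m' _ hm'
  refine ⟨convPow μ m x⁻¹ * r₀ ^ m, (convPow μ m' x * r₀ ^ m')⁻¹, by positivity,
    fun r hr hrρ => ?_⟩
  have hr' : 0 ≤ r := hr₀.le.trans hr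
  have hG1 : 0 < greenFun μ r 1 := one_pos.trans_le (one_le_greenFun_one hμ hirr hr' hrρ)
  have hGx := greenFun_nonneg hμ hr' x⁻¹
  rw [Set.mem_Icc, le_div_iff₀ hG1, div_le_iff₀ hG1, inv_mul_eq_div, le_div_iff₀ (by positivity)]
  constructor
  · calc convPow μ m x⁻¹ * r₀ ^ m * greenFun μ r 1
        ≤ convPow μ m x⁻¹ * r ^ m * greenFun μ r 1 := by gcongr
      _ ≤ greenFun μ r (x⁻¹ * 1) := convPow_mul_greenFun_le hμ hirr hr' hrρ m _ _
      _ = greenFun μ r x⁻¹ := by rw [mul_one]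
  · calc greenFun μ r x⁻¹ * (convPow μ m' x * r₀ ^ m')
        ≤ convPow μ m' x * r ^ m' * greenFun μ r x⁻¹ := by
          rw [mul_comm]; gcongr
      _ ≤ greenFun μ r (x * x⁻¹) := convPow_mul_greenFun_le hμ hirr hr' hrρ m' _ _
      _ = greenFun μ r 1 := by rw [mul_inv_cancel]

end greenFun

theorem stmt10_general {G : Type*} [Group G] (μ : G → ℝ) (ρ : ℝ)
    (hprob : IsProbMeas μ) (hirr : IsIrreducibleMeas μ)
    (hρ : ρ = Filter.limsup (fun n : ℕ => (convPow μ n 1) ^ ((n : ℝ)⁻¹)) Filter.atTop) :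
    ∃ h : G → ℝ, (∀ x, 0 < h x) ∧ ∀ x : G, ∑' y : G, μ (x⁻¹ * y) * h y ≤ ρ * h x := by
  obtain rfl : ρ = convSpectralRadius μ := hρ
  set ρ := convSpectralRadius μ
  have hρ : 0 < ρ := convSpectralRadius_pos hprob hirr
  have hr : ∀ᶠ r in 𝓝[<] ρ⁻¹, r ∈ Set.Ioo (ρ⁻¹ / 2) ρ⁻¹ :=
    Ioo_mem_nhdsLT (half_lt_self (inv_pos.2 hρ))
  choose c C hc hcC using
    exists_greenFun_inv_div_mem_Icc hprob hirr (r₀ := ρ⁻¹ / 2) (by positivity)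
  have hrρ : ∀ r ∈ Set.Ioo (ρ⁻¹ / 2) ρ⁻¹, r * ρ < 1 := fun r hr =>
    (lt_div_iff₀ hρ).1 (by rw [one_div]; exact hr.2)
  refine exists_pos_tsum_mul_le_of_tendsto (l := 𝓝[<] ρ⁻¹) (s := fun r => r⁻¹)
    (u := fun r x => greenFun μ r x⁻¹ / greenFun μ r 1) ?_ hc
    (hr.mono fun r hr x => hcC x r hr.1.le (hrρ r hr)) (hr.mono fun r hr x F => ?_)
  · simpa using (tendsto_inv₀ (inv_ne_zero hρ.ne')).mono_left nhdsWithin_le_nhds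
  · have hr0 : 0 < r := by linarith [hr.1, inv_pos.2 hρ]
    have hG1 := one_le_greenFun_one hprob hirr hr0.le (hrρ r hr)
    simp only [← mul_div_assoc, ← Finset.sum_div]
    rw [div_le_div_iff_of_pos_right (by linarith), le_inv_mul_iff₀ hr0]
    exact mul_sum_mul_greenFun_inv_le hprob hirr hr0.le (hrρ r hr) x F

/-- there exists a positive `ρ(μ)`-subharmonic function
`h : Γ → (0,∞)`, i.e. `∑_y μ(x⁻¹y) h(y) ≤ ρ(μ) h(x)` for every `x`. -/
theorem stmt10 {G : Type*} [Group G] [Countable G] (μ : G → ℝ) (ρ : ℝ)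
    (hprob : IsProbMeas μ) (hirr : IsIrreducibleMeas μ)
    (hρ : ρ = Filter.limsup (fun n : ℕ => (convPow μ n 1) ^ ((n : ℝ)⁻¹)) Filter.atTop) :
    ∃ h : G → ℝ, (∀ x, 0 < h x) ∧ ∀ x : G, ∑' y : G, μ (x⁻¹ * y) * h y ≤ ρ * h x :=
  stmt10_general μ ρ hprob hirr hρ
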